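/- Assume all entries of A_x are at least α > 0 for every x, and parameter errors satisfy δ_∞ + δ_∞Δ_x + Δ_x ≤ 1/3 and Δ_x ≤ α/3 for all x. Then for any probability vector w ∈ R^m and any observation x and coordinate i: [Â_x w]_i / (b̂_∞^T (Û^T O) Â_x w) ≥ ([A_x w]_i − Δ_x) / (1_m^T A_x w + δ_∞ + δ_∞Δ_x + Δ_x) ≥ α/2, where Â_x = (Û^T O)^{-1} B̂_x (Û^T O). -/

import Mathlib

open Matrix

/-- Vector ∞-norm. -/
noncomputable def linfnorm {m : ℕ} (v : Fin m → ℝ) : ℝ := ⨆ i : Fin m, |v i|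

/-- Operator norm induced by the vector 1-norm (max column sum). -/
noncomputable def opL1 {m : ℕ} (M : Matrix (Fin m) (Fin m) ℝ) : ℝ :=
  ⨆ j : Fin m, ∑ i, |M i j|

/-!
Write `a = A_x w` and `â = Â_x w`. As `w` is a probability vector, `a` is an average of the
columns of `A_x`, so `a ≥ α` entrywise and `1ᵀ a ≤ 1` (column `j` of `A_x` sums to `O_{x,j}`);
the induced 1-norm bound gives `|â_k - a_k| ≤ Δ_x` and `|1ᵀ â - 1ᵀ a| ≤ Δ_x`, so `â ≥ 2α/3`.
The normaliser is `b̂_∞ᵀ (Ûᵀ O) â = vᵀ â` with `v` within `δ_∞` of `1` entrywise, hence it is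
positive and at most `(1 + δ_∞)(1ᵀ a + Δ_x) ≤ 1ᵀ a + δ_∞ + δ_∞ Δ_x + Δ_x`. This gives the first
inequality; the second follows from `a_i - Δ_x ≥ 2α/3` and a denominator of at most `4/3`.
-/

section WeightedAverage

variable {ι : Type*} [Fintype ι] {w f : ι → ℝ} {c : ℝ}

theorem le_sum_mul_of_le (hw : ∀ j, 0 ≤ w j) (hsum : ∑ j, w j = 1) (hf : ∀ j, c ≤ f j) :
    c ≤ ∑ j, f j * w j :=
  calc c = ∑ j, c * w j := by rw [← Finset.mul_sum, hsum, mul_one]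
    _ ≤ ∑ j, f j * w j := Finset.sum_le_sum fun j _ => mul_le_mul_of_nonneg_right (hf j) (hw j)

theorem sum_mul_le_of_le (hw : ∀ j, 0 ≤ w j) (hsum : ∑ j, w j = 1) (hf : ∀ j, f j ≤ c) :
    ∑ j, f j * w j ≤ c :=
  calc ∑ j, f j * w j ≤ ∑ j, c * w j :=
        Finset.sum_le_sum fun j _ => mul_le_mul_of_nonneg_right (hf j) (hw j)
    _ = c := by rw [← Finset.mul_sum, hsum, mul_one]

theorem abs_sum_mul_le_of_abs_le (hw : ∀ j, 0 ≤ w j) (hsum : ∑ j, w j = 1)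
    (hf : ∀ j, |f j| ≤ c) : |∑ j, f j * w j| ≤ c :=
  abs_le.2 ⟨le_sum_mul_of_le hw hsum fun j => (abs_le.1 (hf j)).1,
    sum_mul_le_of_le hw hsum fun j => (abs_le.1 (hf j)).2⟩

end WeightedAverage

section MulVec

variable {ι κ : Type*} [Fintype κ]

theorem sum_mulVec_apply [Fintype ι] (M : Matrix ι κ ℝ) (w : κ → ℝ) :
    ∑ k, (M *ᵥ w) k = ∑ j, (∑ k, M k j) * w j := by
  simp only [mulVec, dotProduct, Finset.sum_mul]
  exact Finset.sum_comm

theorem dotProduct_mul_mulVec [Fintype ι] (b : ι → ℝ) (M : Matrix ι κ ℝ) (N : Matrix κ κ ℝ)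
    (w : κ → ℝ) : b ⬝ᵥ ((M * N) *ᵥ w) = (Mᵀ *ᵥ b) ⬝ᵥ (N *ᵥ w) := by
  rw [← mulVec_mulVec, dotProduct_mulVec, mulVec_transpose]

theorem abs_dotProduct_sub_sum_le {v u : κ → ℝ} {δ : ℝ} (hv : ∀ k, |v k - 1| ≤ δ)
    (hu : ∀ k, 0 ≤ u k) : |v ⬝ᵥ u - ∑ k, u k| ≤ δ * ∑ k, u k := by
  have hdiff : v ⬝ᵥ u - ∑ k, u k = ∑ k, (v k - 1) * u k := by
    simp only [dotProduct, sub_mul, one_mul, Finset.sum_sub_distrib]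
  rw [hdiff, Finset.mul_sum]
  refine (Finset.abs_sum_le_sum_abs _ _).trans (Finset.sum_le_sum fun k _ => ?_)
  rw [abs_mul, abs_of_nonneg (hu k)]
  exact mul_le_mul_of_nonneg_right (hv k) (hu k)

theorem sum_apply_mul_diagonal [Fintype ι] [DecidableEq κ] (T : Matrix ι κ ℝ) (d : κ → ℝ)
    (j : κ) : ∑ k, (T * diagonal d) k j = (∑ k, T k j) * d j := by
  simp only [mul_diagonal, Finset.sum_mul]

variable {w : κ → ℝ}

theorem le_mulVec_apply (hw : ∀ j, 0 ≤ w j) (hsum : ∑ j, w j = 1) {M : Matrix ι κ ℝ} {α : ℝ}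
    {k : ι} (hM : ∀ j, α ≤ M k j) : α ≤ (M *ᵥ w) k :=
  le_sum_mul_of_le hw hsum hM

theorem abs_mulVec_apply_le (hw : ∀ j, 0 ≤ w j) (hsum : ∑ j, w j = 1) {M : Matrix ι κ ℝ}
    {c : ℝ} {k : ι} (hM : ∀ j, |M k j| ≤ c) : |(M *ᵥ w) k| ≤ c :=
  abs_sum_mul_le_of_abs_le hw hsum hM

variable [Fintype ι]

theorem sum_mulVec_apply_le (hw : ∀ j, 0 ≤ w j) (hsum : ∑ j, w j = 1) {M : Matrix ι κ ℝ}
    {c : ℝ} (hM : ∀ j, ∑ k, M k j ≤ c) : ∑ k, (M *ᵥ w) k ≤ c :=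
  sum_mulVec_apply M w ▸ sum_mul_le_of_le hw hsum hM

theorem abs_sum_mulVec_apply_le (hw : ∀ j, 0 ≤ w j) (hsum : ∑ j, w j = 1) {M : Matrix ι κ ℝ}
    {c : ℝ} (hM : ∀ j, ∑ k, |M k j| ≤ c) : |∑ k, (M *ᵥ w) k| ≤ c :=
  sum_mulVec_apply M w ▸
    abs_sum_mul_le_of_abs_le hw hsum fun j => (Finset.abs_sum_le_sum_abs _ _).trans (hM j)

end MulVec

section Norms

variable {m : ℕ}

theorem linfnorm_nonneg (v : Fin m → ℝ) : 0 ≤ linfnorm v :=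
  Real.iSup_nonneg fun i => abs_nonneg (v i)

theorem abs_apply_le_linfnorm (v : Fin m → ℝ) (i : Fin m) : |v i| ≤ linfnorm v :=
  le_ciSup (f := fun i => |v i|) (Set.finite_range _).bddAbove i

theorem opL1_nonneg (M : Matrix (Fin m) (Fin m) ℝ) : 0 ≤ opL1 M :=
  Real.iSup_nonneg fun _ => Finset.sum_nonneg fun _ _ => abs_nonneg _

theorem sum_abs_apply_le_opL1 (M : Matrix (Fin m) (Fin m) ℝ) (j : Fin m) :
    ∑ i, |M i j| ≤ opL1 M :=
  le_ciSup (f := fun j => ∑ i, |M i j|) (Set.finite_range _).bddAbove j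

theorem abs_apply_le_opL1 (M : Matrix (Fin m) (Fin m) ℝ) (i j : Fin m) : |M i j| ≤ opL1 M :=
  (Finset.single_le_sum (fun k _ => abs_nonneg (M k j)) (Finset.mem_univ i)).trans
    (sum_abs_apply_le_opL1 M j)

end Norms

theorem hmm_state_update_lower_bound_general (m n : ℕ)
    (T : Matrix (Fin m) (Fin m) ℝ) (O : Matrix (Fin n) (Fin m) ℝ)
    (hTcol : ∀ j, ∑ i, T i j = 1)
    (hOnn : ∀ x j, 0 ≤ O x j) (hOcol : ∀ j, ∑ x, O x j = 1)
    (A : Fin n → Matrix (Fin m) (Fin m) ℝ)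
    (hA : ∀ y, A y = T * Matrix.diagonal (fun i => O y i))
    (α : ℝ) (hα : 0 < α) (hAα : ∀ y i j, α ≤ A y i j)
    (Uhat : Matrix (Fin n) (Fin m) ℝ)
    (binfhat : Fin m → ℝ)
    (Ahat : Fin n → Matrix (Fin m) (Fin m) ℝ)
    (Δx : Fin n → ℝ) (hΔx : ∀ y, Δx y = opL1 (Ahat y - A y))
    (δinf : ℝ) (hδinf : δinf = linfnorm ((Uhatᵀ * O)ᵀ.mulVec binfhat - fun _ => (1 : ℝ)))
    (hsmall : ∀ y, δinf + δinf * Δx y + Δx y ≤ 1 / 3)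
    (hΔα : ∀ y, Δx y ≤ α / 3)
    (w : Fin m → ℝ) (hwnn : ∀ i, 0 ≤ w i) (hwsum : ∑ i, w i = 1)
    (x : Fin n) (i : Fin m) :
    (((A x).mulVec w) i - Δx x)
        / (dotProduct (fun _ => (1 : ℝ)) ((A x).mulVec w) + δinf + δinf * Δx x + Δx x)
      ≤ ((Ahat x).mulVec w) i
        / dotProduct binfhat (((Uhatᵀ * O) * Ahat x).mulVec w) ∧
    α / 2 ≤ (((A x).mulVec w) i - Δx x)
        / (dotProduct (fun _ => (1 : ℝ)) ((A x).mulVec w) + δinf + δinf * Δx x + Δx x) := by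
  set a := A x *ᵥ w
  set â := Ahat x *ᵥ w
  have hΔ : 0 ≤ Δx x := hΔx x ▸ opL1_nonneg _
  have hδ : 0 ≤ δinf := hδinf ▸ linfnorm_nonneg _
  have ha : ∀ k, α ≤ a k := fun k => le_mulVec_apply hwnn hwsum (hAα x k)
  have hS : ∑ k, a k ≤ 1 := sum_mulVec_apply_le hwnn hwsum fun j => by
    rw [hA, sum_apply_mul_diagonal, hTcol, one_mul, ← hOcol j]
    exact Finset.single_le_sum (fun y _ => hOnn y j) (Finset.mem_univ x)
  have hâ : ∀ k, |â k - a k| ≤ Δx x := fun k => by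
    rw [hΔx, ← Pi.sub_apply, ← sub_mulVec]
    exact abs_mulVec_apply_le hwnn hwsum fun j => abs_apply_le_opL1 _ k j
  have hŜ : |∑ k, â k - ∑ k, a k| ≤ Δx x := by
    rw [hΔx]
    simpa only [sub_mulVec, Pi.sub_apply, Finset.sum_sub_distrib] using
      abs_sum_mulVec_apply_le hwnn hwsum fun j => sum_abs_apply_le_opL1 (Ahat x - A x) j
  have hâ_lb : ∀ k, 2 * α / 3 ≤ â k := fun k => by
    linarith [(abs_le.1 (hâ k)).1, ha k, hΔα x]
  have hD : |binfhat ⬝ᵥ ((Uhatᵀ * O * Ahat x) *ᵥ w) - ∑ k, â k| ≤ δinf * ∑ k, â k := by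
    rw [dotProduct_mul_mulVec]
    exact abs_dotProduct_sub_sum_le (fun k => hδinf ▸ abs_apply_le_linfnorm (_ - fun _ => 1) k)
      fun k => by linarith [hâ_lb k]
  set D := binfhat ⬝ᵥ ((Uhatᵀ * O * Ahat x) *ᵥ w)
  have hâ_le : â i ≤ ∑ k, â k :=
    Finset.single_le_sum (fun k _ => by linarith [hâ_lb k]) (Finset.mem_univ i)
  have hD_pos : 0 < D := by
    nlinarith [abs_le.1 hD, hsmall x, hâ_lb i, mul_nonneg hδ hΔ]
  have hD_le : D ≤ ∑ k, a k + δinf + δinf * Δx x + Δx x := by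
    nlinarith [abs_le.1 hD, abs_le.1 hŜ]
  rw [show (fun _ => (1 : ℝ)) = 1 from rfl, one_dotProduct]
  refine ⟨div_le_div₀ (by linarith [hâ_lb i]) (by linarith [(abs_le.1 (hâ i)).1]) hD_pos hD_le, ?_⟩
  rw [le_div_iff₀ (by linarith [ha i, hΔα x])]
  nlinarith [ha i, hΔα x, hsmall x]

/-- assume all entries of each `A_x` are at least `α > 0`, and the parameter
errors satisfy `δ_∞ + δ_∞ Δ_x + Δ_x ≤ 1/3` and `Δ_x ≤ α/3` for all `x`.  Then for every
probability vector `w`, observation `x`, and coordinate `i`: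
`[Â_x w]_i / (b̂_∞ᵀ (Ûᵀ O) Â_x w) ≥ ([A_x w]_i − Δ_x)/(1ₘᵀ A_x w + δ_∞ + δ_∞ Δ_x + Δ_x) ≥ α/2`,
where `Â_x = (Ûᵀ O)⁻¹ B̂_x (Ûᵀ O)`. -/
theorem hmm_state_update_lower_bound (m n : ℕ) (hm : 0 < m)
    (T : Matrix (Fin m) (Fin m) ℝ) (O : Matrix (Fin n) (Fin m) ℝ)
    (hTnn : ∀ i j, 0 ≤ T i j) (hTcol : ∀ j, ∑ i, T i j = 1)
    (hOnn : ∀ x j, 0 ≤ O x j) (hOcol : ∀ j, ∑ x, O x j = 1)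
    (A : Fin n → Matrix (Fin m) (Fin m) ℝ)
    (hA : ∀ y, A y = T * Matrix.diagonal (fun i => O y i))
    (α : ℝ) (hα : 0 < α) (hAα : ∀ y i j, α ≤ A y i j)
    (Uhat : Matrix (Fin n) (Fin m) ℝ) (hU : IsUnit (Uhatᵀ * O))
    (Bhat : Fin n → Matrix (Fin m) (Fin m) ℝ) (binfhat : Fin m → ℝ)
    (Ahat : Fin n → Matrix (Fin m) (Fin m) ℝ)
    (hAhat : ∀ y, Ahat y = (Uhatᵀ * O)⁻¹ * Bhat y * (Uhatᵀ * O))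
    (Δx : Fin n → ℝ) (hΔx : ∀ y, Δx y = opL1 (Ahat y - A y))
    (δinf : ℝ) (hδinf : δinf = linfnorm ((Uhatᵀ * O)ᵀ.mulVec binfhat - fun _ => (1 : ℝ)))
    (hsmall : ∀ y, δinf + δinf * Δx y + Δx y ≤ 1 / 3)
    (hΔα : ∀ y, Δx y ≤ α / 3)
    (w : Fin m → ℝ) (hwnn : ∀ i, 0 ≤ w i) (hwsum : ∑ i, w i = 1)
    (x : Fin n) (i : Fin m) :
    (((A x).mulVec w) i - Δx x)
        / (dotProduct (fun _ => (1 : ℝ)) ((A x).mulVec w) + δinf + δinf * Δx x + Δx x)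
      ≤ ((Ahat x).mulVec w) i
        / dotProduct binfhat (((Uhatᵀ * O) * Ahat x).mulVec w) ∧
    α / 2 ≤ (((A x).mulVec w) i - Δx x)
        / (dotProduct (fun _ => (1 : ℝ)) ((A x).mulVec w) + δinf + δinf * Δx x + Δx x) :=
  hmm_state_update_lower_bound_general m n T O hTcol hOnn hOcol A hA α hα hAα Uhat binfhat Ahat Δx
    hΔx δinf hδinf hsmall hΔα w hwnn hwsum x i
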